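/- For any Parseval frame Φ for F^N with M vectors, the equiangular distance satisfies EAD(Φ) = N − N²/M + M(M−1)c²_{M,N} − 2 c_{M,N} TC(Φ), where c_{M,N} = sqrt(N(M−N)/(M²(M−1))). Hence EAD(Φ) is minimized over Parseval frames exactly when the total coherence TC(Φ) is maximized. -/

import Mathlib

open Matrix Finset

noncomputable def totalCoherence {N M : ℕ} (Φ : Matrix (Fin N) (Fin M) ℂ) : ℝ :=
  ∑ i, ∑ j ∈ Finset.univ.erase i, ‖(Φᴴ * Φ) i j‖

/-- The Welch constant. -/
noncomputable def welchConst (N M : ℕ) : ℝ :=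
  Real.sqrt (((N : ℝ) * ((M : ℝ) - (N : ℝ))) / ((M : ℝ) ^ 2 * ((M : ℝ) - 1)))

/-- The equiangular distance of a Parseval frame. -/
noncomputable def EAD {N M : ℕ} (Φ : Matrix (Fin N) (Fin M) ℂ) : ℝ :=
  (∑ i, (((Φᴴ * Φ) i i).re - (N : ℝ) / (M : ℝ)) ^ 2) +
    ∑ i, ∑ j ∈ Finset.univ.erase i, (‖(Φᴴ * Φ) i j‖ - welchConst N M) ^ 2

/-! The Gram matrix `G = Φᴴ Φ` of a Parseval frame is a Hermitian idempotent of trace `N`, so its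
diagonal sums to `N` and, since `G * G = G`, the squares `‖G i j‖ ^ 2` also sum to `tr G = N`.
Expanding the squares in `EAD Φ`, everything except the cross term `-2 c TC(Φ)` is therefore the
same for all Parseval frames, and `c > 0` for `0 < N < M`. -/

theorem Finset.sum_sub_const_sq {ι R : Type*} [CommRing R] (s : Finset ι) (f : ι → R) (c : R) :
    ∑ i ∈ s, (f i - c) ^ 2 = ∑ i ∈ s, f i ^ 2 - 2 * c * ∑ i ∈ s, f i + #s * c ^ 2 := by
  have hterm : ∀ i, (f i - c) ^ 2 = f i ^ 2 - 2 * c * f i + c ^ 2 := fun i => by ring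
  simp only [hterm, sum_add_distrib, sum_sub_distrib, sum_const, nsmul_eq_mul, mul_sum]

namespace Matrix

variable {𝕜 m n : Type*} [RCLike 𝕜] [Fintype n]

lemma IsHermitian.sum_sq_norm_eq_re_trace_mul_self {G : Matrix n n 𝕜} (hG : G.IsHermitian) :
    ∑ i, ∑ j, ‖G i j‖ ^ 2 = RCLike.re (G * G).trace := by
  have hrow : ∀ i, (G * G) i i = ∑ j, ((‖G i j‖ ^ 2 : ℝ) : 𝕜) := fun i => by
    refine mul_apply.trans (sum_congr rfl fun j _ => ?_)
    rw [← hG.apply j i, RCLike.ofReal_pow, ← RCLike.mul_conj]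
    rfl
  simp [trace, hrow]

lemma IsHermitian.sum_sq_re_diag_add_sum_sq_norm_offDiag [DecidableEq n] {G : Matrix n n 𝕜}
    (hG : G.IsHermitian) :
    ∑ i, RCLike.re (G i i) ^ 2 + ∑ i, ∑ j ∈ univ.erase i, ‖G i j‖ ^ 2 =
      ∑ i, ∑ j, ‖G i j‖ ^ 2 := by
  rw [← sum_add_distrib]
  refine sum_congr rfl fun i _ => ?_
  rw [← add_sum_erase _ _ (mem_univ i), ← hG.coe_re_apply_self i, RCLike.norm_ofReal, sq_abs,
    RCLike.ofReal_re]

variable [Fintype m] [DecidableEq m] {Φ : Matrix m n 𝕜}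

lemma isIdempotentElem_conjTranspose_mul_self (hΦ : Φ * Φᴴ = 1) :
    IsIdempotentElem (Φᴴ * Φ) := by
  rw [IsIdempotentElem, Matrix.mul_assoc, ← Matrix.mul_assoc Φ, hΦ, Matrix.one_mul]

lemma trace_conjTranspose_mul_self_eq_card (hΦ : Φ * Φᴴ = 1) :
    (Φᴴ * Φ).trace = Fintype.card m := by
  rw [trace_mul_comm, hΦ, trace_one]

lemma sum_sq_norm_conjTranspose_mul_self_eq_card (hΦ : Φ * Φᴴ = 1) :
    ∑ i, ∑ j, ‖(Φᴴ * Φ) i j‖ ^ 2 = Fintype.card m := by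
  rw [(isHermitian_conjTranspose_mul_self Φ).sum_sq_norm_eq_re_trace_mul_self,
    isIdempotentElem_conjTranspose_mul_self hΦ, trace_conjTranspose_mul_self_eq_card hΦ,
    RCLike.natCast_re]

end Matrix

lemma welchConst_pos {N M : ℕ} (hN : 0 < N) (hNM : N < M) : 0 < welchConst N M := by
  have hN' : (1 : ℝ) ≤ N := by exact_mod_cast hN
  have hNM' : (N : ℝ) < M := by exact_mod_cast hNM
  exact Real.sqrt_pos.2 (div_pos (mul_pos (by linarith) (by linarith))
    (mul_pos (pow_pos (by linarith) 2) (by linarith)))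

lemma EAD_eq {N M : ℕ} (hM : M ≠ 0) {Φ : Matrix (Fin N) (Fin M) ℂ} (hΦ : Φ * Φᴴ = 1) :
    EAD Φ = N - N ^ 2 / M + M * (M - 1) * welchConst N M ^ 2 -
      2 * welchConst N M * totalCoherence Φ := by
  have hframe :
      ∑ i, ((Φᴴ * Φ) i i).re ^ 2 + ∑ i, ∑ j ∈ univ.erase i, ‖(Φᴴ * Φ) i j‖ ^ 2 = N := by
    refine (isHermitian_conjTranspose_mul_self Φ).sum_sq_re_diag_add_sum_sq_norm_offDiag.trans ?_
    rw [sum_sq_norm_conjTranspose_mul_self_eq_card hΦ, Fintype.card_fin]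
  have htrace : ∑ i, ((Φᴴ * Φ) i i).re = N := by
    simpa [trace] using congrArg Complex.re (trace_conjTranspose_mul_self_eq_card hΦ)
  have hcard : ∀ i : Fin M, (#(univ.erase i) : ℝ) = M - 1 := fun i => by
    rw [card_erase_of_mem (mem_univ i), card_univ, Fintype.card_fin,
      Nat.cast_pred (Nat.pos_of_ne_zero hM)]
  unfold EAD totalCoherence
  simp only [sum_sub_const_sq, hcard, sum_add_distrib, sum_sub_distrib, sum_const, ← mul_sum,
    card_univ, Fintype.card_fin, nsmul_eq_mul, htrace]
  field_simp
  linear_combination (M : ℝ) * hframe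

theorem EAD_formula {N M : ℕ} (hN : 0 < N) (hNM : N < M)
    (Φ : Matrix (Fin N) (Fin M) ℂ) (hΦ : Φ * Φᴴ = 1) :
    EAD Φ = (N : ℝ) - (N : ℝ) ^ 2 / (M : ℝ) +
        (M : ℝ) * ((M : ℝ) - 1) * (welchConst N M) ^ 2 -
        2 * welchConst N M * totalCoherence Φ ∧
      ((∀ Ψ : Matrix (Fin N) (Fin M) ℂ, Ψ * Ψᴴ = 1 → EAD Φ ≤ EAD Ψ) ↔
        (∀ Ψ : Matrix (Fin N) (Fin M) ℂ, Ψ * Ψᴴ = 1 →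
          totalCoherence Ψ ≤ totalCoherence Φ)) := by
  have hM : M ≠ 0 := (hN.trans hNM).ne'
  have hc : 0 < 2 * welchConst N M := mul_pos two_pos (welchConst_pos hN hNM)
  refine ⟨EAD_eq hM hΦ, forall₂_congr fun Ψ hΨ => ?_⟩
  rw [EAD_eq hM hΦ, EAD_eq hM hΨ, sub_le_sub_iff_left, mul_le_mul_iff_of_pos_left hc]
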